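/- arXiv:math/0412327 — 7 statements merged into one kernel-verified Lean document; each statement's English description precedes it below -/
import Mathlib

section
/- Let X be a compact Hausdorff abelian topological group and let H be a closed subgroup of X of finite index. Then there exists a sequence u = ⟨u_n : n ∈ ω⟩ of characters of X such that H = s_u(X). (Explicitly, one may take any sequence u : ω → H^⊥ listing each element of the finite annihilator H^⊥ = {φ ∈ X̂ : φ(H) = {0}} infinitely often.) -/
open Filter Topology

/-- The circle group `𝕋 = ℝ/ℤ`. -/
abbrev Torus := AddCircle (1 : ℝ)

/-- The continuous characters of a topological abelian group `X`,
i.e. the continuous homomorphisms `X → 𝕋`. -/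
abbrev GChar (X : Type*) [AddCommGroup X] [TopologicalSpace X] :=
  ContinuousAddMonoidHom X Torus

/-- `sU u = s_u(X) = {x ∈ X : u_n(x) → 0 in 𝕋}`. -/
def sU {X : Type*} [AddCommGroup X] [TopologicalSpace X] (u : ℕ → GChar X) : Set X :=
  {x | Tendsto (fun n => u n x) atTop (𝓝 0)}

/-- `CB B = C_B(X) = {x ∈ X : for every ε > 0, ‖φ(x)‖ < ε for all but finitely
many φ ∈ B}`, where `‖·‖` on `𝕋 = ℝ/ℤ` is the distance to the nearest integer. -/
def CB {X : Type*} [AddCommGroup X] [TopologicalSpace X] (B : Set (GChar X)) : Set X :=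
  {x | ∀ ε > 0, {φ ∈ B | ¬ ‖φ x‖ < ε}.Finite}

/-!
Since `H` is closed of finite index it is open, so `X ⧸ H` is finite and discrete and every
homomorphism `X ⧸ H →+ 𝕋` is a character of `X` vanishing on `H`. These homomorphisms separate
the points of `X ⧸ H` (characters into `ℚ/ℤ ⊆ ℝ/ℤ` separate points of any abelian group). Listing,
for each coset `g`, a homomorphism nonzero at `g` infinitely often gives a sequence that is
identically `0` on `H` and takes a fixed nonzero value infinitely often at each `x ∉ H`.
-/

noncomputable def ratCircleToTorus : AddCircle (1 : ℚ) →+ Torus :=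
  QuotientAddGroup.map _ _ (Rat.castHom ℝ).toAddMonoidHom fun q hq => by
    obtain ⟨n, rfl⟩ := AddSubgroup.mem_zmultiples_iff.mp hq
    exact AddSubgroup.mem_zmultiples_iff.mpr ⟨n, by simp⟩

lemma ratCircleToTorus_injective : Function.Injective ratCircleToTorus := by
  refine (injective_iff_map_eq_zero _).mpr fun a ha => ?_
  induction a using QuotientAddGroup.induction_on with
  | H q =>
    obtain ⟨n, hn⟩ := (AddCircle.coe_eq_zero_iff (1 : ℝ)).mp ha
    have hnq : (n : ℝ) = q := by simpa using hn
    exact (AddCircle.coe_eq_zero_iff 1).mpr ⟨n, by rw [zsmul_one]; exact_mod_cast hnq⟩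

lemma exists_addMonoidHom_torus_apply_ne_zero {G : Type*} [AddCommGroup G] {g : G}
    (hg : g ≠ 0) : ∃ c : G →+ Torus, c g ≠ 0 := by
  obtain ⟨c, hc⟩ := CharacterModule.exists_character_apply_ne_zero_of_ne_zero hg
  exact ⟨ratCircleToTorus.comp c, (map_ne_zero_iff _ ratCircleToTorus_injective).mpr hc⟩

namespace ContinuousAddMonoidHom

variable {X A : Type*} [AddCommGroup X] [TopologicalSpace X] [SeparatelyContinuousAdd X]
  [AddMonoid A] [TopologicalSpace A] {H : AddSubgroup X}

def ofQuotient (hH : IsOpen (H : Set X)) (c : X ⧸ H →+ A) : X →ₜ+ A where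
  toAddMonoidHom := c.comp (QuotientAddGroup.mk' H)
  continuous_toFun :=
    have := QuotientAddGroup.discreteTopology hH
    (continuous_of_discreteTopology (f := c)).comp continuous_quot_mk

@[simp]
lemma ofQuotient_apply (hH : IsOpen (H : Set X)) (c : X ⧸ H →+ A) (x : X) :
    ofQuotient hH c x = c x :=
  rfl

end ContinuousAddMonoidHom

lemma exists_seq_frequently_eq (α : Type*) [Countable α] [Nonempty α] :
    ∃ s : ℕ → α, ∀ a, ∃ᶠ n in atTop, s n = a := by
  obtain ⟨f, hf⟩ := exists_surjective_nat α
  refine ⟨fun n => f n.unpair.1, fun a => frequently_atTop.mpr fun N => ?_⟩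
  obtain ⟨k, rfl⟩ := hf a
  exact ⟨Nat.pair k N, Nat.right_le_pair k N, by simp⟩

lemma coe_eq_sU_of_frequently {X : Type*} [AddCommGroup X] [TopologicalSpace X]
    {H : AddSubgroup X} {u : ℕ → GChar X} (hzero : ∀ n, ∀ x ∈ H, u n x = 0)
    (hsep : ∀ x ∉ H, ∃ c ≠ 0, ∃ᶠ n in atTop, u n x = c) : (H : Set X) = sU u := by
  ext x
  refine ⟨fun hx => ?_, fun hx => ?_⟩
  · simp [sU, hzero _ x hx]
  · by_contra hxH
    obtain ⟨c, hc, hfreq⟩ := hsep x hxH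
    exact hc (isClosed_singleton.mem_of_frequently_of_tendsto hfreq hx).symm

theorem stmt0_general {X : Type*} [AddCommGroup X] [TopologicalSpace X] [IsTopologicalAddGroup X]
    (H : AddSubgroup X) (hclosed : IsClosed (H : Set X))
    (hfin : H.FiniteIndex) :
    ∃ u : ℕ → GChar X, (H : Set X) = sU u := by
  have hopen : IsOpen (H : Set X) := H.isOpen_of_isClosed_of_finiteIndex hclosed
  have : Finite (X ⧸ H) := H.finite_quotient_of_finiteIndex
  have hchar : ∀ g : X ⧸ H, ∃ c : X ⧸ H →+ Torus, g ≠ 0 → c g ≠ 0 := fun g => by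
    by_cases hg : g = 0
    · exact ⟨0, fun h => (h hg).elim⟩
    · obtain ⟨c, hc⟩ := exists_addMonoidHom_torus_apply_ne_zero hg
      exact ⟨c, fun _ => hc⟩
  choose c hc using hchar
  obtain ⟨s, hs⟩ := exists_seq_frequently_eq (X ⧸ H)
  refine ⟨fun n => .ofQuotient hopen (c (s n)), coe_eq_sU_of_frequently (fun n x hx => ?_) ?_⟩
  · rw [ContinuousAddMonoidHom.ofQuotient_apply, (QuotientAddGroup.eq_zero_iff x).mpr hx, map_zero]
  · intro x hx
    refine ⟨c x x, hc _ ((QuotientAddGroup.eq_zero_iff x).not.mpr hx), (hs x).mono fun n hn => ?_⟩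
    rw [ContinuousAddMonoidHom.ofQuotient_apply, hn]

/-- Every closed subgroup of finite index in a compact Hausdorff abelian topological
group is of the form `s_u(X)` for some sequence `u` of characters. -/
theorem stmt0 {X : Type*} [AddCommGroup X] [TopologicalSpace X] [IsTopologicalAddGroup X]
    [CompactSpace X] [T2Space X] (H : AddSubgroup X) (hclosed : IsClosed (H : Set X))
    (hfin : H.FiniteIndex) :
    ∃ u : ℕ → GChar X, (H : Set X) = sU u :=
  stmt0_general H hclosed hfin
end

section
/- Let X be a compact Hausdorff abelian topological group, let μ be a Haar measure on X with μ(X) = 1, and let B be a countably infinite subset of X̂. Then μ(C_B(X)) = 0, i.e. C_B(X) is a Haar null set. -/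
open Filter Topology

/-!
Enumerate `B` injectively as `u : ℕ → X̂`; then `C_B(X) ⊆ s_u(X)`. The functions
`e(u n) = exp(2πi u n)` form an orthonormal family in `L²(μ)` (`conj e(u i) · e(u j)` is a
nontrivial character for `i ≠ j`, and its integral vanishes by translation invariance), so by Bessel's inequality
`∫_S e(u n) dμ = ⟪1_S, e(u n)⟫ → 0` for every measurable `S`. For `S = s_u(X)` the integrands
tend to `1` pointwise on `S`, so by dominated convergence the same integrals tend to `μ(S)`.
Hence `μ(s_u(X)) = 0`.
-/

open MeasureTheory ComplexConjugate

lemma Orthonormal.tendsto_inner_atTop_zero {𝕜 E : Type*} [RCLike 𝕜] [SeminormedAddCommGroup E]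
    [InnerProductSpace 𝕜 E] {v : ℕ → E} (hv : Orthonormal 𝕜 v) (w : E) :
    Tendsto (fun n => inner 𝕜 w (v n)) atTop (𝓝 0) := by
  have hsq := (hv.inner_products_summable w).tendsto_atTop_zero.sqrt
  rw [Real.sqrt_zero] at hsq
  rw [tendsto_zero_iff_norm_tendsto_zero]
  simpa only [norm_inner_symm w, Real.sqrt_sq (norm_nonneg _)] using hsq

section CircleChar

variable {X : Type*} [AddCommGroup X] [TopologicalSpace X]

noncomputable def circleChar (ψ : GChar X) (x : X) : ℂ :=
  AddCircle.toCircle (ψ x)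

lemma continuous_circleChar (ψ : GChar X) : Continuous (circleChar ψ) :=
  continuous_subtype_val.comp (AddCircle.continuous_toCircle.comp ψ.continuous)

lemma norm_circleChar (ψ : GChar X) (x : X) : ‖circleChar ψ x‖ = 1 :=
  Circle.norm_coe _

lemma circleChar_add (ψ : GChar X) (x y : X) :
    circleChar ψ (x + y) = circleChar ψ x * circleChar ψ y := by
  simp only [circleChar, map_add, AddCircle.toCircle_add, Circle.coe_mul]

lemma conj_circleChar_mul (ψ φ : GChar X) (x : X) :
    conj (circleChar ψ x) * circleChar φ x = circleChar (φ - ψ) x := by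
  have hsub : (φ - ψ) x = φ x + -ψ x := sub_eq_add_neg _ _
  rw [circleChar, circleChar, circleChar, hsub, AddCircle.toCircle_add, AddCircle.toCircle_neg,
    Circle.coe_mul, Circle.coe_inv_eq_conj, mul_comm]

lemma circleChar_zero (x : X) : circleChar (0 : GChar X) x = 1 := by
  simp [circleChar]

lemma tendsto_circleChar_of_mem_sU {u : ℕ → GChar X} {x : X} (hx : x ∈ sU u) :
    Tendsto (fun n => circleChar (u n) x) atTop (𝓝 1) := by
  have hcont : Continuous fun z : Torus => (AddCircle.toCircle z : ℂ) :=
    continuous_subtype_val.comp AddCircle.continuous_toCircle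
  simpa [circleChar, Function.comp_def] using (hcont.tendsto 0).comp hx

lemma CB_subset_sU {B : Set (GChar X)} {u : ℕ → GChar X} (hu : Function.Injective u)
    (huB : ∀ n, u n ∈ B) : CB B ⊆ sU u := by
  intro x hx
  refine NormedAddGroup.tendsto_nhds_zero.2 fun ε hε => ?_
  have hfin : {n | ¬ ‖u n x‖ < ε}.Finite :=
    ((hx ε hε).preimage hu.injOn).subset fun n hn => ⟨huB n, hn⟩
  rw [← Nat.cofinite_eq_atTop]
  simpa using hfin.eventually_cofinite_notMem

variable [MeasurableSpace X] [OpensMeasurableSpace X]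

lemma measurableSet_sU (u : ℕ → GChar X) : MeasurableSet (sU u) :=
  measurableSet_tendsto _ fun n => (u n).continuous.measurable

end CircleChar

section HaarIntegral

variable {X : Type*} [AddCommGroup X] [TopologicalSpace X] [MeasurableSpace X]
  (μ : Measure X)

lemma integral_circleChar_eq_zero [MeasurableAdd X] [μ.IsAddLeftInvariant]
    {ψ : GChar X} (hψ : ψ ≠ 0) : ∫ x, circleChar ψ x ∂μ = 0 := by
  obtain ⟨x₀, hx₀⟩ : ∃ x₀, ψ x₀ ≠ 0 := by
    by_contra! h
    exact hψ (ContinuousAddMonoidHom.ext h)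
  have hne : circleChar ψ x₀ ≠ 1 := by
    intro h
    apply hx₀
    apply AddCircle.injective_toCircle one_ne_zero
    rw [AddCircle.toCircle_zero]
    exact Circle.coe_injective h
  have hinv := integral_add_left_eq_self (μ := μ) (circleChar ψ) x₀
  simp only [circleChar_add, integral_const_mul] at hinv
  have : (circleChar ψ x₀ - 1) * ∫ x, circleChar ψ x ∂μ = 0 := by
    rw [sub_one_mul, hinv, sub_self]
  exact (mul_eq_zero.1 this).resolve_left (sub_ne_zero.2 hne)

variable [OpensMeasurableSpace X]

lemma memLp_circleChar [IsFiniteMeasure μ] (ψ : GChar X) : MemLp (circleChar ψ) 2 μ :=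
  MemLp.of_bound (continuous_circleChar ψ).aestronglyMeasurable 1
    (ae_of_all _ fun x => (norm_circleChar ψ x).le)

lemma orthonormal_circleChar [IsProbabilityMeasure μ] [MeasurableAdd X] [μ.IsAddLeftInvariant]
    {u : ℕ → GChar X} (hu : Function.Injective u) :
    Orthonormal ℂ fun n => (memLp_circleChar μ (u n)).toLp (circleChar (u n)) := by
  rw [orthonormal_iff_ite]
  intro i j
  have hinner : inner ℂ ((memLp_circleChar μ (u i)).toLp _) ((memLp_circleChar μ (u j)).toLp _)
      = ∫ x, circleChar (u j - u i) x ∂μ := by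
    rw [L2.inner_def]
    refine integral_congr_ae ?_
    filter_upwards [(memLp_circleChar μ (u i)).coeFn_toLp,
      (memLp_circleChar μ (u j)).coeFn_toLp] with x hi hj
    rw [hi, hj, RCLike.inner_apply', conj_circleChar_mul]
  rw [hinner]
  split_ifs with hij
  · simp [hij, circleChar_zero]
  · exact integral_circleChar_eq_zero μ (sub_ne_zero.2 fun h => hij (hu h).symm)

lemma tendsto_setIntegral_circleChar_zero [IsProbabilityMeasure μ] [MeasurableAdd X]
    [μ.IsAddLeftInvariant] {u : ℕ → GChar X} (hu : Function.Injective u) {s : Set X}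
    (hs : MeasurableSet s) :
    Tendsto (fun n => ∫ x in s, circleChar (u n) x ∂μ) atTop (𝓝 0) := by
  refine ((orthonormal_circleChar μ hu).tendsto_inner_atTop_zero
    (indicatorConstLp 2 hs (measure_ne_top μ s) (1 : ℂ))).congr fun n => ?_
  rw [L2.inner_indicatorConstLp_one]
  exact setIntegral_congr_ae hs ((memLp_circleChar μ (u n)).coeFn_toLp.mono fun x hx _ => hx)

lemma tendsto_setIntegral_circleChar_of_subset_sU [IsFiniteMeasure μ] {u : ℕ → GChar X}
    {s : Set X} (hs : MeasurableSet s) (hsu : s ⊆ sU u) :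
    Tendsto (fun n => ∫ x in s, circleChar (u n) x ∂μ) atTop (𝓝 (μ.real s : ℂ)) := by
  have hlim : Tendsto (fun n => ∫ x in s, circleChar (u n) x ∂μ) atTop
      (𝓝 (∫ _ in s, (1 : ℂ) ∂μ)) :=
    tendsto_integral_of_dominated_convergence (fun _ => 1)
      (fun n => (continuous_circleChar (u n)).aestronglyMeasurable) (integrable_const 1)
      (fun n => ae_of_all _ fun x => (norm_circleChar (u n) x).le)
      ((ae_restrict_iff' hs).2 (ae_of_all _ fun x hx => tendsto_circleChar_of_mem_sU (hsu hx)))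
  simpa using hlim

theorem measure_sU_eq_zero [IsProbabilityMeasure μ] [MeasurableAdd X] [μ.IsAddLeftInvariant]
    {u : ℕ → GChar X} (hu : Function.Injective u) : μ (sU u) = 0 := by
  have hs := measurableSet_sU u
  have hreal : (μ.real (sU u) : ℂ) = 0 := tendsto_nhds_unique
    (tendsto_setIntegral_circleChar_of_subset_sU μ hs subset_rfl)
    (tendsto_setIntegral_circleChar_zero μ hu hs)
  exact (measureReal_eq_zero_iff (measure_ne_top μ _)).1 (by exact_mod_cast hreal)

end HaarIntegral

open MeasureTheory in
theorem stmt1_general {X : Type*} [AddCommGroup X] [TopologicalSpace X] [IsTopologicalAddGroup X]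
    [MeasurableSpace X] [BorelSpace X]
    (μ : Measure X) [μ.IsAddHaarMeasure] (hμ : μ Set.univ = 1)
    (B : Set (GChar X)) (hBinf : B.Infinite) :
    μ (CB B) = 0 := by
  have : IsProbabilityMeasure μ := ⟨hμ⟩
  let e := hBinf.natEmbedding
  have hu : Function.Injective fun n => (e n : GChar X) :=
    Subtype.val_injective.comp e.injective
  exact measure_mono_null (CB_subset_sU hu fun n => (e n).2) (measure_sU_eq_zero μ hu)

open MeasureTheory in
/-- For a compact Hausdorff abelian group `X` with normalized Haar measure `μ` and
a countably infinite set `B` of characters, `C_B(X)` is a Haar null set. -/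
theorem stmt1 {X : Type*} [AddCommGroup X] [TopologicalSpace X] [IsTopologicalAddGroup X]
    [CompactSpace X] [T2Space X] [MeasurableSpace X] [BorelSpace X]
    (μ : Measure X) [μ.IsAddHaarMeasure] (hμ : μ Set.univ = 1)
    (B : Set (GChar X)) (hBcount : B.Countable) (hBinf : B.Infinite) :
    μ (CB B) = 0 :=
  stmt1_general μ hμ B hBinf
end

section
/- Let X be a compact Hausdorff abelian topological group and let H be a subgroup of X of infinite index such that H = s_u(X) for some sequence u = ⟨u_n : n ∈ ω⟩ of characters of X. Then there exists a countably infinite set B ⊆ X̂ such that H = C_B(X). -/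
open Filter Topology

/-!
Write `K` for the set of characters taken infinitely often by `u`. Then
`s_u(X) = C_{range u}(X) ∩ ⋂_{φ ∈ K} ker φ`.

For a countably infinite `B`, enumerated injectively as `v_k`, and an enumeration `w_j` of
`K ∪ {0}`, adding the characters `v_k + w_j` (`j ≤ k`) to `B` turns `C_B(X)` into
`C_B(X) ∩ ⋂_j ker w_j`: each `w_j` meets all but finitely many `v_k`, so `v_k → 0` and
`v_k + w_j → 0` at `x` force `w_j x = 0`, while each `v_k` meets only finitely many `w_j`.

If `range u` is infinite, take `B = range u`. Otherwise `H = ⋂_{φ ∈ K} ker φ`; a finite group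
of characters has a common kernel of finite index, so the subgroup generated by `K` is infinite,
and any countably infinite subset of it annihilates `H` and serves as `B`.
-/

open Set Function

section

variable {X : Type*} [AddCommGroup X] [TopologicalSpace X]

def recurrentValues {α : Type*} (u : ℕ → α) : Set α := {a | {n | u n = a}.Infinite}

lemma countable_recurrentValues {α : Type*} (u : ℕ → α) : (recurrentValues u).Countable :=
  (countable_range u).mono fun _ h => h.nonempty.imp fun _ hn => hn

lemma exists_injective_seq_mem {α : Type*} {s : Set α} (hs : s.Infinite) :
    ∃ v : ℕ → α, Injective v ∧ ∀ k, v k ∈ s :=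
  ⟨fun k => hs.natEmbedding s k, Subtype.coe_injective.comp (hs.natEmbedding s).injective,
    fun k => (hs.natEmbedding s k).2⟩

def charKer (S : Set (GChar X)) : AddSubgroup X := ⨅ φ : S, (φ : GChar X).toAddMonoidHom.ker

lemma mem_charKer {S : Set (GChar X)} {x : X} : x ∈ charKer S ↔ ∀ φ ∈ S, φ x = 0 := by
  simp [charKer, AddSubgroup.mem_iInf]

lemma charKer_anti {S T : Set (GChar X)} (h : S ⊆ T) : charKer T ≤ charKer S :=
  fun _ hx => mem_charKer.mpr fun φ hφ => mem_charKer.mp hx φ (h hφ)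

lemma charKer_closure (S : Set (GChar X)) :
    charKer (AddSubgroup.closure S : Set (GChar X)) = charKer S := by
  refine le_antisymm (charKer_anti AddSubgroup.subset_closure) fun x hx => ?_
  rw [mem_charKer] at hx ⊢
  intro ψ hψ
  induction hψ using AddSubgroup.closure_induction with
  | mem φ hφ => exact hx φ hφ
  | zero => rfl
  | add φ ψ _ _ hφ hψ => rw [ContinuousAddMonoidHom.add_apply, hφ, hψ, add_zero]
  | neg φ _ hφ => exact neg_eq_zero.mpr hφ

lemma finite_range_of_isOfFinAddOrder {φ : GChar X} (hφ : IsOfFinAddOrder φ) :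
    (range φ).Finite :=
  (AddCircle.finite_torsion 1 hφ.addOrderOf_pos).subset <| by
    rintro _ ⟨x, rfl⟩
    simp [← ContinuousAddMonoidHom.nsmul_apply, addOrderOf_nsmul_eq_zero]

lemma index_charKer_ne_zero {S : Set (GChar X)}
    (hS : (AddSubgroup.closure S : Set (GChar X)).Finite) : (charKer S).index ≠ 0 := by
  rw [← charKer_closure]
  have := hS.to_subtype
  refine AddSubgroup.index_iInf_ne_zero fun ψ => ?_
  have hψ : IsOfFinAddOrder (ψ : GChar X) :=
    AddSubmonoid.isOfFinAddOrder_coe.mpr (isOfFinAddOrder_of_finite ψ)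
  rw [AddSubgroup.index_ker, Nat.card_ne_zero]
  exact ⟨inferInstance, (finite_range_of_isOfFinAddOrder hψ).to_subtype⟩

lemma CB_anti {B B' : Set (GChar X)} (h : B ⊆ B') : CB B' ⊆ CB B :=
  fun _ hx ε hε => (hx ε hε).subset fun _ hφ => ⟨h hφ.1, hφ.2⟩

lemma CB_of_finite {B : Set (GChar X)} (hB : B.Finite) : CB B = univ :=
  eq_univ_of_forall fun _ _ _ => hB.subset fun _ hφ => hφ.1

lemma charKer_subset_CB (B : Set (GChar X)) : (charKer B : Set X) ⊆ CB B := by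
  intro x hx ε hε
  convert finite_empty
  refine eq_empty_of_forall_notMem fun φ hφ => hφ.2 ?_
  rwa [mem_charKer.mp hx φ hφ.1, norm_zero]

lemma tendsto_atTop_zero_iff_finite {E : Type*} [SeminormedAddGroup E] {f : ℕ → E} :
    Tendsto f atTop (𝓝 0) ↔ ∀ ε > 0, {n | ¬ ‖f n‖ < ε}.Finite := by
  simp only [NormedAddGroup.tendsto_nhds_zero, ← Nat.cofinite_eq_atTop, eventually_cofinite]

lemma tendsto_apply_of_mem_CB {B : Set (GChar X)} {x : X} (hx : x ∈ CB B) {f : ℕ → GChar X}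
    (hf : Injective f) (hfB : ∀ᶠ k in atTop, f k ∈ B) :
    Tendsto (fun k => f k x) atTop (𝓝 0) := by
  refine tendsto_atTop_zero_iff_finite.mpr fun ε hε => ?_
  rw [← Nat.cofinite_eq_atTop, eventually_cofinite] at hfB
  refine (hfB.union ((hx ε hε).preimage hf.injOn)).subset fun k hk => ?_
  by_cases hkB : f k ∈ B
  · exact Or.inr ⟨hkB, hk⟩
  · exact Or.inl hkB

lemma sU_eq_CB_inter_charKer (u : ℕ → GChar X) :
    sU u = CB (range u) ∩ charKer (recurrentValues u) := by
  ext x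
  constructor
  · intro hx
    refine ⟨fun ε hε => ((tendsto_atTop_zero_iff_finite.mp hx ε hε).image u).subset ?_,
      mem_charKer.mpr fun φ hφ => ?_⟩
    · rintro _ ⟨⟨n, rfl⟩, hn⟩
      exact mem_image_of_mem u hn
    · exact tendsto_nhds_unique_of_frequently_eq tendsto_const_nhds hx
        ((Nat.frequently_atTop_iff_infinite.mpr hφ).mono fun n hn => by rw [hn])
  · rintro ⟨hCB, hK⟩
    refine tendsto_atTop_zero_iff_finite.mpr fun ε hε => ?_
    refine ((hCB ε hε).biUnion (t := fun φ => {n | u n = φ}) fun φ hφ => ?_).subset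
      fun n hn => mem_biUnion ⟨⟨n, rfl⟩, hn⟩ rfl
    by_contra hφK
    exact hφ.2 (by rwa [mem_charKer.mp hK φ (not_finite.mp hφK), norm_zero])

def staircase (v w : ℕ → GChar X) : Set (GChar X) := {ψ | ∃ k j, j ≤ k ∧ v k + w j = ψ}

lemma countable_staircase (v w : ℕ → GChar X) : (staircase v w).Countable :=
  (countable_range fun p : ℕ × ℕ => v p.1 + w p.2).mono <| by
    rintro _ ⟨k, j, -, rfl⟩
    exact ⟨(k, j), rfl⟩

lemma CB_union_staircase {B : Set (GChar X)} {v w : ℕ → GChar X} (hv : Injective v)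
    (hvB : ∀ k, v k ∈ B) : CB (B ∪ staircase v w) = CB B ∩ {x | ∀ j, w j x = 0} := by
  ext x
  constructor
  · intro hx
    refine ⟨CB_anti subset_union_left hx, fun j => ?_⟩
    have hv0 := tendsto_apply_of_mem_CB hx hv (.of_forall fun k => Or.inl (hvB k))
    have hvw0 := tendsto_apply_of_mem_CB hx (f := fun k => v k + w j)
      (fun a b h => hv (add_right_cancel h))
      ((eventually_ge_atTop j).mono fun k hk => Or.inr ⟨k, j, hk, rfl⟩)
    have := hvw0.sub hv0
    simp only [ContinuousAddMonoidHom.add_apply, add_sub_cancel_left, sub_zero] at this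
    exact tendsto_nhds_unique tendsto_const_nhds this
  · rintro ⟨hx, hw⟩ ε hε
    have hbad := (hx ε hε).preimage (f := v) hv.injOn
    refine ((hx ε hε).union
      (hbad.biUnion fun k _ => (finite_Iic k).image fun j => v k + w j)).subset ?_
    rintro _ ⟨hψ | ⟨k, j, hjk, rfl⟩, hbadψ⟩
    · exact Or.inl ⟨hψ, hbadψ⟩
    · rw [ContinuousAddMonoidHom.add_apply, hw j, add_zero] at hbadψ
      exact Or.inr (mem_biUnion ⟨hvB k, hbadψ⟩ ⟨j, hjk, rfl⟩)

lemma exists_CB_eq_CB_inter_charKer {B K : Set (GChar X)} (hBc : B.Countable) (hBi : B.Infinite)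
    (hK : K.Countable) :
    ∃ B' : Set (GChar X), B'.Countable ∧ B'.Infinite ∧ CB B' = CB B ∩ charKer K := by
  obtain ⟨v, hv, hvB⟩ := exists_injective_seq_mem hBi
  obtain ⟨w, hw⟩ := (hK.insert 0).exists_eq_range (insert_nonempty _ _)
  refine ⟨B ∪ staircase v w, hBc.union (countable_staircase v w),
    hBi.mono subset_union_left, ?_⟩
  rw [CB_union_staircase hv hvB]
  congr 1
  ext x
  change (∀ j, w j x = 0) ↔ x ∈ charKer K
  rw [mem_charKer, ← forall_mem_range (p := fun φ : GChar X => φ x = 0), ← hw,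
    forall_mem_insert]
  exact and_iff_right rfl

lemma exists_charKer_subset_CB {K : Set (GChar X)} (hK : (charKer K).index = 0) :
    ∃ B : Set (GChar X), B.Countable ∧ B.Infinite ∧ (charKer K : Set X) ⊆ CB B := by
  obtain ⟨v, hv, hvK⟩ := exists_injective_seq_mem fun h => index_charKer_ne_zero h hK
  refine ⟨range v, countable_range v, infinite_range_of_injective hv,
    fun x hx => charKer_subset_CB _ (charKer_anti ?_ ((charKer_closure K).ge hx))⟩
  rintro _ ⟨k, rfl⟩
  exact hvK k

end

theorem stmt2_general {X : Type*} [AddCommGroup X] [TopologicalSpace X]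
    (H : AddSubgroup X) (hinf : H.index = 0)
    (u : ℕ → GChar X) (hu : (H : Set X) = sU u) :
    ∃ B : Set (GChar X), B.Countable ∧ B.Infinite ∧ (H : Set X) = CB B := by
  set K := recurrentValues u
  rw [sU_eq_CB_inter_charKer] at hu
  obtain ⟨B, hBc, hBi, hB⟩ :
      ∃ B : Set (GChar X), B.Countable ∧ B.Infinite ∧ CB B ∩ charKer K = H := by
    rcases (range u).finite_or_infinite with hfin | hinfu
    · rw [CB_of_finite hfin, univ_inter, SetLike.coe_set_eq] at hu
      obtain ⟨B, hBc, hBi, hKB⟩ := exists_charKer_subset_CB (hu ▸ hinf)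
      exact ⟨B, hBc, hBi, by rw [hu, inter_eq_right.mpr hKB]⟩
    · exact ⟨range u, countable_range u, hinfu, hu.symm⟩
  obtain ⟨B', hB'c, hB'i, hB'⟩ :=
    exists_CB_eq_CB_inter_charKer hBc hBi (countable_recurrentValues u)
  exact ⟨B', hB'c, hB'i, by rw [hB', hB]⟩

/-- If `H` is a subgroup of infinite index of a compact Hausdorff abelian group `X`
and `H = s_u(X)` for some sequence of characters `u`, then `H = C_B(X)` for some
countably infinite set `B` of characters.  (In Mathlib, `H.index = 0` expresses
that the index of `H` in `X` is infinite.) -/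
theorem stmt2 {X : Type*} [AddCommGroup X] [TopologicalSpace X] [IsTopologicalAddGroup X]
    [CompactSpace X] [T2Space X] (H : AddSubgroup X) (hinf : H.index = 0)
    (u : ℕ → GChar X) (hu : (H : Set X) = sU u) :
    ∃ B : Set (GChar X), B.Countable ∧ B.Infinite ∧ (H : Set X) = CB B :=
  stmt2_general H hinf u hu
end

section
/- Identify the characters of 𝕋 = ℝ/ℤ with the integers (n acting by x ↦ nx), and let B = {k·n! : n ∈ ω, 0 < k ≤ n}. Then C_B(𝕋) = ℚ/ℤ, the subgroup of rational (equivalently, torsion) points of 𝕋. That is, x ∈ 𝕋 satisfies: for every ε > 0, ‖k·n!·x‖ < ε for all but finitely many pairs (k, n) with 0 < k ≤ n, if and only if x ∈ ℚ/ℤ. -/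
open Filter Topology

/-- `C_B(𝕋)` for a set `B` of integers, identifying the character group of
`𝕋 = ℝ/ℤ` with `ℤ` (with `b ∈ ℤ` acting by `x ↦ bx`). -/
def CBInt (B : Set ℤ) : Set Torus :=
  {x | ∀ ε > 0, {b ∈ B | ¬ ‖b • x‖ < ε}.Finite}

/-!
Torsion points lie in `C_B(𝕋)` because `n ∣ k·m!` as soon as `m ≥ n`. Conversely, let
`x ∈ C_B(𝕋)`. For large `n` every `k·(n!x)` with `1 ≤ k ≤ n` lies within `1/4` of `0`; since
`‖k y‖ = k‖y‖` as long as `k‖y‖ ≤ 1/2`, this forces `n‖n!x‖ < 1/4`. In that range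
`‖(n+1)!x‖ = (n+1)‖n!x‖ ≥ ‖n!x‖`, so `‖N!x‖ ≤ ‖n!x‖ < 1/(4n)` for all `n ≥ N`, whence `N!x = 0`.
-/

namespace AddCircle

variable {p : ℝ}

theorem exists_coe_eq_and_abs_eq_norm (y : AddCircle p) :
    ∃ t : ℝ, (t : AddCircle p) = y ∧ |t| = ‖y‖ := by
  obtain ⟨s, rfl⟩ := QuotientAddGroup.mk_surjective y
  refine ⟨s - round (p⁻¹ * s) * p, ?_, (norm_eq p).symm⟩
  rw [coe_sub, sub_eq_self, ← zsmul_eq_mul, coe_zsmul, coe_period, smul_zero]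

theorem norm_nsmul_eq_mul_norm (hp : p ≠ 0) {y : AddCircle p} {n : ℕ}
    (h : n * ‖y‖ ≤ |p| / 2) : ‖n • y‖ = n * ‖y‖ := by
  obtain ⟨t, rfl, ht⟩ := exists_coe_eq_and_abs_eq_norm y
  have hnt : |n * t| = n * ‖(t : AddCircle p)‖ := by rw [abs_mul, Nat.abs_cast, ht]
  rw [← coe_nsmul, nsmul_eq_mul, (norm_coe_eq_abs_iff p hp).2 (hnt ▸ h), hnt]

theorem mul_norm_lt_of_forall_norm_nsmul_lt (hp : p ≠ 0) {y : AddCircle p} {n : ℕ} {c : ℝ}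
    (hc : c ≤ |p| / 4) (hn : 0 < n) (h : ∀ k, 0 < k → k ≤ n → ‖k • y‖ < c) :
    n * ‖y‖ < c := by
  have hy : ‖y‖ < c := by simpa using h 1 one_pos hn
  induction n, hn using Nat.le_induction with
  | base => simpa using hy
  | succ k hk ih =>
    have hk' : (k + 1 : ℕ) * ‖y‖ ≤ |p| / 2 := by
      push_cast; linarith [ih (fun j hj hjk => h j hj (by omega))]
    rw [← norm_nsmul_eq_mul_norm hp hk']
    exact h _ k.succ_pos le_rfl

theorem factorial_nsmul_eq_zero_of_forall_mul_norm_lt (hp : p ≠ 0) {x : AddCircle p} {N : ℕ}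
    (hN : 0 < N) (h : ∀ n, N ≤ n → n * ‖n.factorial • x‖ < |p| / 4) :
    N.factorial • x = 0 := by
  have hmono : ∀ n, N ≤ n → ‖N.factorial • x‖ ≤ ‖n.factorial • x‖ := by
    intro n hn
    induction n, hn using Nat.le_induction with
    | base => exact le_rfl
    | succ n hn ih =>
      have hsmall := h n hn
      have hn1 : (1 : ℝ) ≤ n := by exact_mod_cast hN.trans_le hn
      have hle : (n + 1 : ℕ) * ‖n.factorial • x‖ ≤ |p| / 2 := by
        push_cast; nlinarith [norm_nonneg (n.factorial • x)]
      rw [Nat.factorial_succ, mul_nsmul', norm_nsmul_eq_mul_norm hp hle]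
      push_cast; nlinarith [norm_nonneg (n.factorial • x)]
  by_contra hne
  have hpos : 0 < ‖N.factorial • x‖ := norm_pos_iff.2 hne
  obtain ⟨m, hm⟩ := exists_nat_gt (|p| / 4 / ‖N.factorial • x‖)
  have hmN : N ≤ max m N := le_max_right _ _
  have hm' : |p| / 4 < max m N * ‖N.factorial • x‖ := by
    rw [div_lt_iff₀ hpos] at hm
    exact hm.trans_le (by gcongr; exact_mod_cast le_max_left m N)
  have := h _ hmN
  nlinarith [hmono _ hmN, (Nat.cast_nonneg (max m N) : (0 : ℝ) ≤ _)]

end AddCircle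

theorem exists_forall_norm_zsmul_lt_of_mem_CBInt {B : Set ℤ} {x : Torus} (hx : x ∈ CBInt B)
    {ε : ℝ} (hε : 0 < ε) : ∃ M : ℤ, ∀ b ∈ B, M < b → ‖b • x‖ < ε := by
  obtain ⟨M, hM⟩ := (hx ε hε).bddAbove
  exact ⟨M, fun b hb hMb => not_not.1 fun hbad => (hM ⟨hb, hbad⟩).not_gt hMb⟩

theorem mem_CBInt_of_nsmul_eq_zero {B : Set ℤ} {x : Torus} {n : ℕ} (hx : n • x = 0)
    (hB : {b ∈ B | ¬ (n : ℤ) ∣ b}.Finite) : x ∈ CBInt B := by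
  intro ε hε
  refine hB.subset fun b ⟨hb, hbad⟩ => ⟨hb, fun ⟨c, hc⟩ => hbad ?_⟩
  rwa [hc, mul_comm, mul_zsmul, natCast_zsmul, hx, smul_zero, norm_zero]

def factorialMultiples : Set ℤ := {m : ℤ | ∃ n k : ℕ, 0 < k ∧ k ≤ n ∧ m = k * n.factorial}

theorem finite_factorialMultiples_not_dvd {n : ℕ} (hn : 0 < n) :
    {b ∈ factorialMultiples | ¬ (n : ℤ) ∣ b}.Finite := by
  refine (Set.finite_Icc (0 : ℤ) (n * n.factorial)).subset ?_
  rintro b ⟨⟨m, k, hk, hkm, rfl⟩, hndvd⟩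
  have hmn : m < n := by
    by_contra! hnm
    exact hndvd (Dvd.dvd.mul_left (Int.natCast_dvd_natCast.2 (Nat.dvd_factorial hn hnm)) _)
  constructor
  · positivity
  · exact_mod_cast Nat.mul_le_mul (hkm.trans hmn.le) (Nat.factorial_le hmn.le)

theorem exists_factorial_nsmul_eq_zero_of_mem_CBInt {x : Torus}
    (hx : x ∈ CBInt factorialMultiples) : ∃ N : ℕ, N.factorial • x = 0 := by
  obtain ⟨M, hM⟩ := exists_forall_norm_zsmul_lt_of_mem_CBInt hx (ε := 1 / 4) (by norm_num)
  obtain ⟨N, hN, hMN⟩ : ∃ N : ℕ, 0 < N ∧ M < N.factorial :=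
    ⟨M.toNat + 1, by omega, by have := Nat.self_le_factorial (M.toNat + 1); omega⟩
  refine ⟨N, AddCircle.factorial_nsmul_eq_zero_of_forall_mul_norm_lt one_ne_zero hN
    fun n hn => ?_⟩
  rw [abs_one]
  refine AddCircle.mul_norm_lt_of_forall_norm_nsmul_lt one_ne_zero (by norm_num)
    (hN.trans_le hn) fun k hk hkn => ?_
  have hb : M < (k * n.factorial : ℕ) :=
    hMN.trans_le (by exact_mod_cast (Nat.factorial_le hn).trans (Nat.le_mul_of_pos_left _ hk))
  have := hM _ ⟨n, k, hk, hkn, rfl⟩ (by exact_mod_cast hb)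
  rwa [mul_zsmul, natCast_zsmul, natCast_zsmul] at this

/-- For `B = {k·n! : 0 < k ≤ n}`, the set `C_B(𝕋)` is exactly `ℚ/ℤ`, the subgroup
of rational (equivalently, torsion) points of `𝕋`. -/
theorem stmt3 :
    CBInt {m : ℤ | ∃ n k : ℕ, 0 < k ∧ k ≤ n ∧ m = k * n.factorial} =
      {x : Torus | ∃ n : ℕ, 0 < n ∧ n • x = 0} := by
  ext x
  constructor
  · intro hx
    obtain ⟨N, hN⟩ := exists_factorial_nsmul_eq_zero_of_mem_CBInt hx
    exact ⟨N.factorial, N.factorial_pos, hN⟩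
  · rintro ⟨n, hn, hx⟩
    exact mem_CBInt_of_nsmul_eq_zero hx (finite_factorialMultiples_not_dvd hn)
end

section
/- Let (X, d) be a metric space, F a countably infinite subset of X, and ⟨F_n : n ∈ ω⟩ a sequence of finite subsets of X with F_n ⊆ F_{n+1} for all n and ⋃_n F_n = F. Then there exists a strictly decreasing sequence of positive reals ε_n converging to 0 such that for every x ∉ F there are infinitely many n with d(x, y) ≥ ε_n for all y ∈ F_n (i.e. x lies outside the ε_n-neighborhood of F_n). -/
/-!
Each finite set `Fₙ₊₁` is `δₙ₊₁`-separated for some `δₙ₊₁ > 0`; take `εₙ ≤ δₙ₊₁ / 2`.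
If `x` lay within `εₙ` of `Fₙ` for every `n ≥ N`, then witnesses at consecutive stages would
both lie in `Fₙ₊₁` at distance `< 2εₙ`, hence coincide. So one point of `F` is within `εₙ` of `x`
for all large `n`, and `εₙ → 0` forces `x ∈ F`.
-/

open Filter Topology

theorem Set.Finite.exists_pos_eq_of_dist_lt {X : Type*} [MetricSpace X] {s : Set X}
    (hs : s.Finite) : ∃ δ > 0, ∀ a ∈ s, ∀ b ∈ s, dist a b < δ → a = b := by
  obtain ⟨C, hC, hsep⟩ := hs.relatively_discrete
  have hC' : min C 1 ≠ ⊤ := (min_le_right C 1).trans_lt ENNReal.one_lt_top |>.ne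
  refine ⟨(min C 1).toReal, ENNReal.toReal_pos (by positivity) hC', fun a ha b hb hab => ?_⟩
  by_contra hne
  have : edist a b < C := calc
    edist a b = ENNReal.ofReal (dist a b) := edist_dist a b
    _ < ENNReal.ofReal (min C 1).toReal :=
      (ENNReal.ofReal_lt_ofReal_iff_of_nonneg dist_nonneg).2 hab
    _ = min C 1 := ENNReal.ofReal_toReal hC'
    _ ≤ C := min_le_left C 1
  exact (hsep a ha b hb hne).not_gt this

theorem exists_strictAnti_tendsto_zero_le (b : ℕ → ℝ) (hb : ∀ n, 0 < b n) :
    ∃ ε : ℕ → ℝ, StrictAnti ε ∧ (∀ n, 0 < ε n) ∧ Tendsto ε atTop (𝓝 0) ∧ ∀ n, ε n ≤ b n := by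
  set m : ℕ → ℝ := fun n => (Finset.range (n + 1)).inf' Finset.nonempty_range_add_one
    (fun k => min (b k) 1)
  have hm_pos n : 0 < m n := (Finset.lt_inf'_iff _).2 fun k _ => lt_min (hb k) one_pos
  have hm_le n : m n ≤ min (b n) 1 := Finset.inf'_le _ (Finset.self_mem_range_succ n)
  have hm_anti : Antitone m := fun i j hij =>
    Finset.inf'_mono _ (Finset.range_subset_range.2 (by omega)) _
  refine ⟨fun n => m n / (n + 1), strictAnti_nat_of_succ_lt fun n => ?_,
    fun n => div_pos (hm_pos n) n.cast_add_one_pos, ?_, fun n => ?_⟩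
  · calc m (n + 1) / (↑(n + 1) + 1) ≤ m n / (↑(n + 1) + 1) := by
          gcongr; exact hm_anti n.le_succ
      _ < m n / (n + 1) := div_lt_div_of_pos_left (hm_pos n) n.cast_add_one_pos (by simp)
  · refine squeeze_zero (fun n => (div_pos (hm_pos n) n.cast_add_one_pos).le) (fun n => ?_)
      tendsto_one_div_add_atTop_nhds_zero_nat
    gcongr
    exact (hm_le n).trans (min_le_right _ _)
  · calc m n / (n + 1) ≤ m n := div_le_self (hm_pos n).le (by linarith [n.cast_nonneg (α := ℝ)])
      _ ≤ b n := (hm_le n).trans (min_le_left _ _)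

theorem exists_forall_ge_dist_lt_of_forall_ge {X : Type*} [PseudoMetricSpace X]
    {Fn : ℕ → Set X} {ε : ℕ → ℝ} (hmono : Monotone Fn) (hε : Antitone ε)
    (hsep : ∀ n, ∀ a ∈ Fn (n + 1), ∀ b ∈ Fn (n + 1), dist a b < 2 * ε n → a = b)
    {x : X} {N : ℕ} (hnear : ∀ n ≥ N, ∃ y ∈ Fn n, dist x y < ε n) :
    ∃ y ∈ Fn N, ∀ n ≥ N, dist x y < ε n := by
  obtain ⟨y, hyN, hxy⟩ := hnear N le_rfl
  refine ⟨y, hyN, Nat.le_induction hxy fun n hNn hxy_n => ?_⟩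
  obtain ⟨z, hz, hxz⟩ := hnear (n + 1) (by omega)
  have hyz : dist y z < 2 * ε n := calc
    dist y z ≤ dist x y + dist x z := dist_triangle_left y z x
    _ < ε n + ε n := add_lt_add hxy_n (hxz.trans_le (hε n.le_succ))
    _ = 2 * ε n := (two_mul _).symm
  rwa [hsep n y (hmono (hNn.trans n.le_succ) hyN) z hz hyz]

theorem infinite_setOf_forall_le_dist {X : Type*} [MetricSpace X] {Fn : ℕ → Set X}
    {ε : ℕ → ℝ} (hmono : Monotone Fn) (hε : Antitone ε) (hε0 : Tendsto ε atTop (𝓝 0))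
    (hsep : ∀ n, ∀ a ∈ Fn (n + 1), ∀ b ∈ Fn (n + 1), dist a b < 2 * ε n → a = b)
    {x : X} (hx : x ∉ ⋃ n, Fn n) : {n | ∀ y ∈ Fn n, ε n ≤ dist x y}.Infinite := by
  rw [← Nat.frequently_atTop_iff_infinite]
  intro hnear
  obtain ⟨N, hN⟩ := eventually_atTop.1 hnear
  simp only [not_forall, not_le, exists_prop] at hN
  obtain ⟨y, hy, hxy⟩ := exists_forall_ge_dist_lt_of_forall_ge hmono hε hsep hN
  have hxy0 : dist x y ≤ 0 :=
    ge_of_tendsto hε0 (eventually_atTop.2 ⟨N, fun n hn => (hxy n hn).le⟩)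
  exact hx (Set.mem_iUnion.2 ⟨N, dist_le_zero.1 hxy0 ▸ hy⟩)

theorem stmt13_general {X : Type*} [MetricSpace X] (F : Set X)
    (Fn : ℕ → Set X) (hfin : ∀ n, (Fn n).Finite) (hmono : ∀ n, Fn n ⊆ Fn (n + 1))
    (hunion : ⋃ n, Fn n = F) :
    ∃ ε : ℕ → ℝ, StrictAnti ε ∧ (∀ n, 0 < ε n) ∧ Tendsto ε atTop (𝓝 0) ∧
      ∀ x ∉ F, {n | ∀ y ∈ Fn n, ε n ≤ dist x y}.Infinite := by
  choose δ hδ_pos hδ using fun n => (hfin n).exists_pos_eq_of_dist_lt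
  obtain ⟨ε, hε_anti, hε_pos, hε0, hεδ⟩ :=
    exists_strictAnti_tendsto_zero_le (fun n => δ (n + 1) / 2) fun n => half_pos (hδ_pos _)
  refine ⟨ε, hε_anti, hε_pos, hε0, fun x hx => ?_⟩
  refine infinite_setOf_forall_le_dist (monotone_nat_of_le_succ hmono) hε_anti.antitone hε0
    (fun n a ha b hb hab => hδ (n + 1) a ha b hb ?_) (hunion ▸ hx)
  linarith [hεδ n]

/-- Let `(X, d)` be a metric space, `F` a countably infinite subset of `X`, and
`Fₙ` finite sets increasing to `F`.  Then there are positive reals `εₙ` strictly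
decreasing to `0` such that every `x ∉ F` lies outside the `εₙ`-neighborhood of
`Fₙ` for infinitely many `n`. -/
theorem stmt13 {X : Type*} [MetricSpace X] (F : Set X)
    (hFcount : F.Countable) (hFinf : F.Infinite)
    (Fn : ℕ → Set X) (hfin : ∀ n, (Fn n).Finite) (hmono : ∀ n, Fn n ⊆ Fn (n + 1))
    (hunion : ⋃ n, Fn n = F) :
    ∃ ε : ℕ → ℝ, StrictAnti ε ∧ (∀ n, 0 < ε n) ∧ Tendsto ε atTop (𝓝 0) ∧
      ∀ x ∉ F, {n | ∀ y ∈ Fn n, ε n ≤ dist x y}.Infinite :=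
  stmt13_general F Fn hfin hmono hunion
end

section
/- Let X be a compact Hausdorff abelian topological group, F a closed subgroup of X, and B a countably infinite subset of X̂. Then F ⊆ C_B(X) if and only if F ⊆ ker(φ) for all but finitely many φ ∈ B. -/
open Filter Topology

open MeasureTheory Set
open scoped ENNReal

theorem le_measure_limsup_atTop {α : Type*} [MeasurableSpace α] {μ : Measure α}
    [IsFiniteMeasure μ] {s : ℕ → Set α} (hs : ∀ n, MeasurableSet (s n)) {c : ℝ≥0∞}
    (hc : ∀ n, c ≤ μ (s n)) : c ≤ μ (limsup s atTop) := by
  have hanti : Antitone fun n ↦ ⋃ i ≥ n, s i := fun m n hmn ↦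
    biUnion_subset_biUnion_left fun i (hi : n ≤ i) ↦ hmn.trans hi
  rw [limsup_eq_iInf_iSup_of_nat]
  simp only [iSup_eq_iUnion, iInf_eq_iInter]
  rw [hanti.measure_iInter
    (fun n ↦ (MeasurableSet.biUnion (to_countable _) fun i _ ↦ hs i).nullMeasurableSet)
    ⟨0, measure_ne_top μ _⟩]
  exact le_iInf fun n ↦ (hc n).trans (measure_mono (subset_biUnion_of_mem (u := s) (le_refl n)))

theorem integral_addChar_eq_zero {G : Type*} [AddGroup G] [MeasurableSpace G] [MeasurableAdd G]
    (μ : Measure G) [μ.IsAddLeftInvariant] {ψ : AddChar G ℂ} (hψ : ψ ≠ 1) :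
    ∫ x, ψ x ∂μ = 0 := by
  obtain ⟨g, hg⟩ := AddChar.ne_one_iff.mp hψ
  have htrans : ψ g * ∫ x, ψ x ∂μ = ∫ x, ψ x ∂μ := by
    simpa only [AddChar.map_add_eq_mul, integral_const_mul] using
      integral_add_left_eq_self (μ := μ) (fun x ↦ ψ x) g
  have : (ψ g - 1) * ∫ x, ψ x ∂μ = 0 := by rw [sub_mul, htrans, one_mul, sub_self]
  exact (mul_eq_zero.mp this).resolve_left (sub_ne_zero.mpr hg)

theorem one_half_le_re_toCircle_of_norm_le {z : Torus} (hz : ‖z‖ ≤ 1 / 6) :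
    1 / 2 ≤ (AddCircle.toCircle z : ℂ).re := by
  induction z using QuotientAddGroup.induction_on with
  | H x =>
  set y := x - round x
  have hyx : (y : Torus) = x := by simp [y]
  have hy : ‖(y : Torus)‖ = |y| :=
    (AddCircle.norm_coe_eq_abs_iff 1 one_ne_zero).mpr (by simpa using abs_sub_round x)
  rw [← hyx, AddCircle.toCircle_apply_mk, Circle.coe_exp, Complex.exp_ofReal_mul_I_re,
    ← Real.cos_abs, ← Real.cos_pi_div_three]
  rw [← hyx, hy] at hz
  have : |2 * Real.pi / 1 * y| ≤ Real.pi / 3 := by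
    rw [abs_mul, abs_of_pos (by positivity)]
    nlinarith [Real.pi_pos]
  exact Real.cos_le_cos_of_nonneg_of_le_pi (abs_nonneg _) (by linarith [Real.pi_pos]) this

theorem inv_three_le_measure_norm_ge {G : Type*} [AddGroup G] [TopologicalSpace G]
    [MeasurableSpace G] [OpensMeasurableSpace G] [MeasurableAdd G] (μ : Measure G)
    [IsProbabilityMeasure μ] [μ.IsAddLeftInvariant] {χ : ContinuousAddMonoidHom G Torus}
    (hχ : χ ≠ 0) : 3⁻¹ ≤ μ {x | 1 / 6 ≤ ‖χ x‖} := by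
  set A := {x | 1 / 6 ≤ ‖χ x‖}
  have hA : MeasurableSet A := measurableSet_le measurable_const (by fun_prop)
  let ψ : AddChar G ℂ :=
    (Circle.coeHom.compAddChar AddCircle.toCircle_addChar).compAddMonoidHom χ.toAddMonoidHom
  have hψ : ψ ≠ 1 := by
    obtain ⟨g, hg⟩ := DFunLike.ne_iff.mp hχ
    refine AddChar.ne_one_iff.mpr ⟨g, fun h ↦ hg ?_⟩
    apply AddCircle.injective_toCircle one_ne_zero
    simpa [ψ] using Circle.ext h
  have hψx : ∀ x, ψ x = AddCircle.toCircle (χ x) := fun _ ↦ rfl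
  have hψnorm : ∀ x, ‖ψ x‖ = 1 := fun x ↦ by rw [hψx, Circle.norm_coe]
  have hψint : Integrable ψ μ := by
    refine .of_bound ?_ 1 (.of_forall fun x ↦ (hψnorm x).le)
    exact (continuous_subtype_val.comp (AddCircle.continuous_toCircle.comp χ.continuous))
      |>.aestronglyMeasurable
  have hre : ∫ x, (ψ x).re ∂μ = 0 := by
    have := integral_re hψint
    simp only [RCLike.re_to_complex] at this
    rw [this, integral_addChar_eq_zero μ hψ, Complex.zero_re]
  -- `Re ψ ≥ 1/2` off `A` and `Re ψ ≥ -1` on `A`, against `∫ Re ψ = 0`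
  have hbound : ∀ x, A.indicator (fun _ ↦ (-3 / 2 : ℝ)) x + 1 / 2 ≤ (ψ x).re := by
    intro x
    by_cases hx : x ∈ A
    · rw [indicator_of_mem hx]
      linarith [neg_le_of_abs_le ((Complex.abs_re_le_norm (ψ x)).trans_eq (hψnorm x))]
    · rw [indicator_of_notMem hx, hψx]
      simpa using one_half_le_re_toCircle_of_norm_le (not_le.mp hx).le
  have hint := integral_mono ((integrable_const _).indicator hA |>.add (integrable_const _))
    hψint.re hbound
  rw [show ∫ x, RCLike.re (ψ x) ∂μ = 0 from hre,
    integral_add ((integrable_const _).indicator hA) (integrable_const _),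
    integral_indicator_const _ hA, integral_const] at hint
  simp only [smul_eq_mul, probReal_univ, one_mul] at hint
  have : (3 : ℝ)⁻¹ ≤ μ.real A := by linarith
  calc (3 : ℝ≥0∞)⁻¹ = ENNReal.ofReal 3⁻¹ := by simp
    _ ≤ μ A := ENNReal.ofReal_le_of_le_toReal this

theorem exists_frequently_norm_ge {H : Type*} [AddGroup H] [TopologicalSpace H]
    [IsTopologicalAddGroup H] [CompactSpace H] {χ : ℕ → ContinuousAddMonoidHom H Torus}
    (hχ : ∀ n, χ n ≠ 0) : ∃ x, ∃ᶠ n in atTop, 1 / 6 ≤ ‖χ n x‖ := by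
  borelize H
  let μ : Measure H := Measure.addHaarMeasure ⊤
  have : IsProbabilityMeasure μ := ⟨Measure.addHaarMeasure_self⟩
  have hlimsup := le_measure_limsup_atTop (μ := μ)
    (fun n ↦ measurableSet_le measurable_const (by fun_prop))
    (fun n ↦ inv_three_le_measure_norm_ge μ (hχ n))
  obtain ⟨x, hx⟩ := nonempty_of_measure_ne_zero (lt_of_lt_of_le (by simp) hlimsup).ne'
  exact ⟨x, mem_limsup_iff_frequently_mem.mp hx⟩

theorem stmt17_general {X : Type*} [AddCommGroup X] [TopologicalSpace X] [IsTopologicalAddGroup X]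
    [CompactSpace X] (F : AddSubgroup X) (hclosed : IsClosed (F : Set X))
    (B : Set (GChar X)) :
    (F : Set X) ⊆ CB B ↔ {φ ∈ B | ¬ ∀ x ∈ F, φ x = 0}.Finite := by
  refine ⟨fun hF ↦ ?_, fun hfin x hx ε hε ↦ hfin.subset fun φ ⟨hφB, hφ⟩ ↦
    ⟨hφB, fun hker ↦ hφ (by simpa [hker x hx] using hε)⟩⟩
  by_contra hinf
  let e := Set.Infinite.natEmbedding _ hinf
  have : CompactSpace F := isCompact_iff_compactSpace.mp hclosed.isCompact
  let χ n : ContinuousAddMonoidHom F Torus :=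
    (e n : GChar X).comp ⟨F.subtype, continuous_subtype_val⟩
  have hχ n : χ n ≠ 0 := by
    obtain ⟨x, hxF, hx⟩ := not_forall₂.mp (e n).2.2
    exact DFunLike.ne_iff.mpr ⟨⟨x, hxF⟩, hx⟩
  obtain ⟨x, hx⟩ := exists_frequently_norm_ge hχ
  refine Nat.frequently_atTop_iff_infinite.mp hx
    (((hF x.2 (1 / 6) (by norm_num)).preimage ?_).subset fun n hn ↦ ⟨(e n).2.1, not_lt.mpr hn⟩)
  exact (Subtype.val_injective.comp e.injective).injOn

/-- For a closed subgroup `F` of a compact Hausdorff abelian group `X` and a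
countably infinite set `B` of characters: `F ⊆ C_B(X)` iff `F ⊆ ker φ` for all but
finitely many `φ ∈ B`. -/
theorem stmt17 {X : Type*} [AddCommGroup X] [TopologicalSpace X] [IsTopologicalAddGroup X]
    [CompactSpace X] [T2Space X] (F : AddSubgroup X) (hclosed : IsClosed (F : Set X))
    (B : Set (GChar X)) (hBcount : B.Countable) (hBinf : B.Infinite) :
    (F : Set X) ⊆ CB B ↔ {φ ∈ B | ¬ ∀ x ∈ F, φ x = 0}.Finite :=
  stmt17_general F hclosed B
end

section
/- Let X be a compact metrizable abelian topological group with a translation-invariant metric d inducing its topology. Let H = ⋃_{n∈ω} F_n where each F_n is a closed subgroup of X and F_n ⊊ F_{n+1} ⊊ X for all n. Suppose y_n ∈ F_{n+1} \ F_n are chosen so that d(y_{n+1}, 0) ≤ d(y_n, F_n)/3 for all n, where d(y, F) = inf{d(y, z) : z ∈ F}. Then the series x = Σ_{k=0}^∞ y_k converges in X and x ∉ H. -/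
open Filter Topology

open Finset Metric

/-!
The partial sums form a Cauchy sequence because `d(yₙ₊₁, 0) ≤ d(yₙ, 0)/3`, and the tail after
`yₙ` has length at most `(3/2) d(yₙ₊₁, 0) ≤ d(yₙ, Fₙ)/2`. If the sum `x` lay in `Fₙ`, then so would
`x - (y₀ + ⋯ + yₙ₋₁)`, which is within `d(yₙ, Fₙ)/2` of `yₙ` by invariance of the metric: impossible,
as `d(yₙ, Fₙ) > 0` for the closed subgroup `Fₙ`.
-/

section InvariantMetric

variable {X : Type*} [AddCommGroup X] [PseudoMetricSpace X] [IsIsometricVAdd Xᵃᵒᵖ X]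

theorem dist_sum_range_succ (y : ℕ → X) (n : ℕ) :
    dist (∑ k ∈ range n, y k) (∑ k ∈ range (n + 1), y k) = dist (y n) 0 := by
  rw [sum_range_succ, dist_comm, add_comm, ← dist_add_right (y n) 0 (∑ k ∈ range n, y k),
    zero_add]

theorem exists_tendsto_sum_range_of_dist_le_geometric [CompleteSpace X] {y : ℕ → X} {r : ℝ}
    (hr₀ : 0 ≤ r) (hr₁ : r < 1) (hy : ∀ n, dist (y (n + 1)) 0 ≤ r * dist (y n) 0) :
    ∃ x, Tendsto (fun N => ∑ k ∈ range N, y k) atTop (𝓝 x) ∧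
      ∀ n, dist (∑ k ∈ range n, y k) x ≤ dist (y n) 0 / (1 - r) := by
  have hgeom (n j : ℕ) : dist (y (n + j)) 0 ≤ dist (y n) 0 * r ^ j := by
    rw [mul_comm]
    exact le_geom (u := fun j => dist (y (n + j)) 0) hr₀ j fun k _ => hy (n + k)
  have hcauchy : CauchySeq fun N => ∑ k ∈ range N, y k :=
    cauchySeq_of_le_geometric r (dist (y 0) 0) hr₁ fun n => by
      simpa only [dist_sum_range_succ, zero_add] using hgeom 0 n
  obtain ⟨x, hx⟩ := cauchySeq_tendsto_of_complete hcauchy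
  refine ⟨x, hx, fun n => ?_⟩
  have hshift : Tendsto (fun j => ∑ k ∈ range (j + n), y k) atTop (𝓝 x) :=
    hx.comp (tendsto_add_atTop_nat n)
  simpa only [zero_add] using dist_le_of_le_geometric_of_tendsto₀ r (dist (y n) 0) hr₁
    (fun j => by simpa only [add_right_comm j 1 n, dist_sum_range_succ, add_comm j n]
      using hgeom n j) hshift

end InvariantMetric

theorem AddSubgroup.notMem_of_dist_add_lt_infDist {X : Type*} [AddGroup X] [PseudoMetricSpace X]
    [IsIsometricVAdd Xᵃᵒᵖ X] {G : AddSubgroup X} {s x : X} (hs : s ∈ G) (y : X)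
    (h : dist (y + s) x < infDist y G) : x ∉ G := fun hx => by
  have hle := infDist_le_dist_of_mem (x := y) (G.sub_mem hx hs)
  rw [← dist_add_right y (x - s) s, sub_add_cancel] at hle
  exact h.not_ge hle

theorem stmt18_general {X : Type*} [AddCommGroup X] [MetricSpace X]
    [CompactSpace X] (hinv : ∀ a b c : X, dist (a + c) (b + c) = dist a b)
    (F : ℕ → AddSubgroup X) (hclosed : ∀ n, IsClosed (F n : Set X))
    (hlt : ∀ n, F n < F (n + 1))
    (y : ℕ → X) (hy1 : ∀ n, y n ∈ F (n + 1)) (hy2 : ∀ n, y n ∉ F n)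
    (hy3 : ∀ n, dist (y (n + 1)) 0 ≤ Metric.infDist (y n) (F n : Set X) / 3) :
    ∃ x : X, Tendsto (fun N => ∑ k ∈ Finset.range N, y k) atTop (𝓝 x) ∧
      x ∉ ⋃ n, (F n : Set X) := by
  have : IsIsometricVAdd Xᵃᵒᵖ X :=
    ⟨fun c => Isometry.of_dist_eq fun a b => hinv a b c.unop⟩
  have hdecay (n : ℕ) : dist (y (n + 1)) 0 ≤ 1 / 3 * dist (y n) 0 := by
    linarith [hy3 n, infDist_le_dist_of_mem (x := y n) (F n).zero_mem]
  obtain ⟨x, hx, htail⟩ :=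
    exists_tendsto_sum_range_of_dist_le_geometric (by norm_num) (by norm_num) hdecay
  refine ⟨x, hx, ?_⟩
  simp only [Set.mem_iUnion, not_exists, SetLike.mem_coe]
  intro n
  have hmono : Monotone F := monotone_nat_of_le_succ fun k => (hlt k).le
  have hsum : ∑ k ∈ range n, y k ∈ F n :=
    sum_mem fun k hk => hmono (mem_range.mp hk) (hy1 k)
  have hpos : 0 < infDist (y n) (F n) :=
    ((hclosed n).notMem_iff_infDist_pos ⟨0, (F n).zero_mem⟩).mp (hy2 n)
  refine AddSubgroup.notMem_of_dist_add_lt_infDist hsum (y n) ?_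
  calc dist (y n + ∑ k ∈ range n, y k) x = dist (∑ k ∈ range (n + 1), y k) x := by
        rw [sum_range_succ, add_comm]
    _ ≤ dist (y (n + 1)) 0 / (1 - 1 / 3) := htail (n + 1)
    _ < infDist (y n) (F n) := by
        rw [show (1 : ℝ) - 1 / 3 = 2 / 3 by norm_num]
        linarith [hy3 n]

/-- Let `X` be a compact abelian group with a translation-invariant metric inducing
its topology, `H = ⋃ₙ Fₙ` with `Fₙ` closed subgroups, `Fₙ ⊊ Fₙ₊₁ ⊊ X`, and choose
`yₙ ∈ Fₙ₊₁ \ Fₙ` with `d(yₙ₊₁, 0) ≤ d(yₙ, Fₙ)/3`.  Then the series `x = Σₖ yₖ`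
converges and `x ∉ H`. -/
theorem stmt18 {X : Type*} [AddCommGroup X] [MetricSpace X] [IsTopologicalAddGroup X]
    [CompactSpace X] (hinv : ∀ a b c : X, dist (a + c) (b + c) = dist a b)
    (F : ℕ → AddSubgroup X) (hclosed : ∀ n, IsClosed (F n : Set X))
    (hlt : ∀ n, F n < F (n + 1)) (hne : ∀ n, F n ≠ ⊤)
    (y : ℕ → X) (hy1 : ∀ n, y n ∈ F (n + 1)) (hy2 : ∀ n, y n ∉ F n)
    (hy3 : ∀ n, dist (y (n + 1)) 0 ≤ Metric.infDist (y n) (F n : Set X) / 3) :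
    ∃ x : X, Tendsto (fun N => ∑ k ∈ Finset.range N, y k) atTop (𝓝 x) ∧
      x ∉ ⋃ n, (F n : Set X) :=
  stmt18_general hinv F hclosed hlt y hy1 hy2 hy3
end
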